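/- Let R be an order in K with conductor f = (R:O) = f_1 ⊕ … ⊕ f_n, and let I = I_1 ⊕ … ⊕ I_n be a fractional O-ideal coprime to the conductor, i.e. f + I = O. Then for every i one has f_i I_i = f_i ∩ I_i and f_i + I_i = O_i, and there is an isomorphism of R-modules I_i/(f_i I_i) ≅ O_i/f_i; consequently I/(fI) ≅ O/f as R-modules. -/
import Mathlib


/-!
Setting: `Z` is a Dedekind domain (not a field) with fraction field `Q`;
`K i` (for `i : Fin n`) are finite field extensions of `Q` and
`K = K₁ ⊕ ⋯ ⊕ Kₙ` is modelled as the product `∀ i, K i`;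
`O i = integralClosure Z (K i)` and `O = integralClosure Z (∀ i, K i)`;
`V = K₁^(s 1) ⊕ ⋯ ⊕ Kₙ^(s n)` is modelled as `∀ i, Fin (s i) → K i`,
a module over `∀ i, K i` with the componentwise diagonal action.
-/

open Submodule

section Paper

variable (Z : Type) [CommRing Z] [IsDomain Z] [IsDedekindDomain Z]
  (Q : Type) [Field Q] [Algebra Z Q] [IsFractionRing Z Q]
  {n : ℕ} (K : Fin n → Type) [∀ i, Field (K i)]
  [∀ i, Algebra Q (K i)] [∀ i, FiniteDimensional Q (K i)]
  [∀ i, Algebra Z (K i)] [∀ i, IsScalarTower Z Q (K i)]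

/-- A *lattice* in a finite-dimensional `Q`-vector space `W`: a finitely generated
sub-`Z`-module of `W` which contains a `Q`-basis of `W` (equivalently, spans `W` over `Q`). -/
def IsLatticeIn {W : Type} [AddCommGroup W] [Module Q W] [Module Z W]
    (L : Submodule Z W) : Prop :=
  L.FG ∧ Submodule.span Q (L : Set W) = ⊤

/-- An *order* in `K = K₁ ⊕ ⋯ ⊕ Kₙ`: a subring of `K` which is a lattice in `K`
(equivalently, a `Z`-subalgebra whose underlying `Z`-module is a lattice in `K`). -/
def IsOrderIn (R : Subalgebra Z (∀ i, K i)) : Prop :=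
  IsLatticeIn Z Q (Subalgebra.toSubmodule R)

/-- A sub-`Z`-module `M` of a `(∀ i, K i)`-module is a *sub-`R`-module* if it is stable
under the order `R`, i.e. `r • v ∈ M` for all `r ∈ R` and `v ∈ M`. -/
def IsStableUnder {W : Type} [AddCommGroup W] [Module Z W] [Module (∀ i, K i) W]
    (R : Subalgebra Z (∀ i, K i)) (M : Submodule Z W) : Prop :=
  ∀ r ∈ R, ∀ v ∈ M, r • v ∈ M

/-- `M` and `N` are *isomorphic as `R`-modules*: there is an additive isomorphism
`M ≃ N` commuting with the action of every element of `R`. -/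
def ModIso {W W' : Type} [AddCommGroup W] [Module Z W] [Module (∀ i, K i) W]
    [AddCommGroup W'] [Module Z W'] [Module (∀ i, K i) W']
    (R : Subalgebra Z (∀ i, K i)) (M : Submodule Z W) (N : Submodule Z W') : Prop :=
  ∃ e : M ≃+ N, ∀ r ∈ R, ∀ (v : W) (hv : v ∈ M) (hrv : r • v ∈ M),
    ((e ⟨r • v, hrv⟩ : N) : W') = r • ((e ⟨v, hv⟩ : N) : W')

variable (s : Fin n → ℕ)

/-- The sub-`Z`-module of `V = ⊕ᵢ Kᵢ^(sᵢ)` cut out coordinatewise by a family of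
submodules `W i j ⊆ Kᵢ`. -/
def piLatticeV (W : ∀ i, Fin (s i) → Submodule Z (K i)) :
    Submodule Z (∀ i, Fin (s i) → K i) where
  carrier := {v | ∀ i j, v i j ∈ W i j}
  add_mem' := fun hu hv i j => (W i j).add_mem (hu i j) (hv i j)
  zero_mem' := fun i j => (W i j).zero_mem
  smul_mem' := fun z _ hv i j => (W i j).smul_mem z (hv i j)

/-- The sub-`Z`-module `I₁ ⊕ ⋯ ⊕ Iₙ` of `K = K₁ ⊕ ⋯ ⊕ Kₙ`. -/
def piIdeal (I : ∀ i, Submodule Z (K i)) : Submodule Z (∀ i, K i) where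
  carrier := {x | ∀ i, x i ∈ I i}
  add_mem' := fun hu hv i => (I i).add_mem (hu i) (hv i)
  zero_mem' := fun i => (I i).zero_mem
  smul_mem' := fun z _ hx i => (I i).smul_mem z (hx i)

/-- A *fractional `Oᵢ`-ideal*: a finitely generated `Oᵢ`-stable sub-`Z`-module of `Kᵢ`
containing a `Q`-basis of `Kᵢ`, where `Oᵢ` is the integral closure of `Z` in `Kᵢ`. -/
def IsFracIdealAt (i : Fin n) (I : Submodule Z (K i)) : Prop :=
  I.FG ∧ Submodule.span Q (I : Set (K i)) = ⊤ ∧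
    ∀ r ∈ integralClosure Z (K i), ∀ x ∈ I, r * x ∈ I

/-- A *fractional ideal of the order `S`* in `K`: a finitely generated `S`-stable
sub-`Z`-module of `K` containing a `Q`-basis of `K`. -/
def IsFracIdealOf (S : Subalgebra Z (∀ i, K i)) (J : Submodule Z (∀ i, K i)) : Prop :=
  J.FG ∧ Submodule.span Q (J : Set (∀ i, K i)) = ⊤ ∧ ∀ r ∈ S, ∀ x ∈ J, r * x ∈ J

/-- The family `(O₁, …, Oₙ)` of maximal orders, as submodules. -/
def maxFam : ∀ i : Fin n, Submodule Z (K i) :=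
  fun i => Subalgebra.toSubmodule (integralClosure Z (K i))

/-- The module `⊕ᵢ (Oᵢ^(sᵢ-1) ⊕ Iᵢ)` inside `V`: in the `i`-th block, the first
`sᵢ - 1` coordinates are `Oᵢ` and the last one is `Iᵢ`. -/
def stdMod (I : ∀ i, Submodule Z (K i)) : Submodule Z (∀ i, Fin (s i) → K i) :=
  piLatticeV Z K s (fun i j =>
    if (j : ℕ) + 1 < s i then Subalgebra.toSubmodule (integralClosure Z (K i)) else I i)

/-- The `i`-th component `fᵢ` of the conductor `f = (R : O)`:
those `a ∈ Kᵢ` with `a·Oᵢ ⊆ R` (via the canonical embedding `Kᵢ → K`). -/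
def conductorComp (R : Subalgebra Z (∀ i, K i)) (i : Fin n) : Submodule Z (K i) where
  carrier := {a | ∀ b ∈ integralClosure Z (K i), Pi.single i (a * b) ∈ R}
  add_mem' := by
    intro x y hx hy b hb
    simpa [add_mul, Pi.single_add] using R.add_mem (hx b hb) (hy b hb)
  zero_mem' := by
    intro b hb
    simpa using R.zero_mem
  smul_mem' := by
    intro z x hx b hb
    simpa [smul_mul_assoc, Pi.single_smul] using R.smul_mem (hx b hb) z

/-- The conductor `f = (R : O) = {x ∈ K : x·O ⊆ R}` as a sub-`Z`-module of `K`. -/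
def conductorSub (R : Subalgebra Z (∀ i, K i)) : Submodule Z (∀ i, K i) where
  carrier := {x | ∀ y ∈ integralClosure Z (∀ i, K i), x * y ∈ R}
  add_mem' := by
    intro x y hx hy b hb
    simpa [add_mul] using R.add_mem (hx b hb) (hy b hb)
  zero_mem' := by
    intro b hb
    simpa using R.zero_mem
  smul_mem' := by
    intro z x hx b hb
    simpa [smul_mul_assoc] using R.smul_mem (hx b hb) z

/-- The module `⊕ᵢ (fᵢ^(sᵢ-1) ⊕ fᵢIᵢ)` inside `V`, where `f = f₁ ⊕ ⋯ ⊕ fₙ` is the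
conductor of the order `R` in the maximal order. -/
def stdModLow (R : Subalgebra Z (∀ i, K i)) (I : ∀ i, Submodule Z (K i)) :
    Submodule Z (∀ i, Fin (s i) → K i) :=
  piLatticeV Z K s (fun i j =>
    if (j : ℕ) + 1 < s i then conductorComp Z K R i else conductorComp Z K R i * I i)

/-- `M·S`, the `S`-module generated by `M` (e.g. `M·O`): the smallest sub-`Z`-module
containing all `r • v` with `r ∈ S` and `v ∈ M`. -/
def extendOrd {W : Type} [AddCommGroup W] [Module Z W] [Module (∀ i, K i) W]
    (S : Subalgebra Z (∀ i, K i)) (M : Submodule Z W) : Submodule Z W :=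
  Submodule.span Z {x | ∃ r ∈ S, ∃ v ∈ M, x = r • v}

/-- An *`R`-linear isomorphism between the quotient modules* `B/A` and `D/C`:
an additive isomorphism compatible with the induced action of every `r ∈ R`. -/
def QuotModIso {W W' : Type} [AddCommGroup W] [Module Z W] [Module (∀ i, K i) W]
    [AddCommGroup W'] [Module Z W'] [Module (∀ i, K i) W']
    (R : Subalgebra Z (∀ i, K i)) (B A : Submodule Z W) (D C : Submodule Z W') : Prop :=
  ∃ e : (↥B ⧸ A.comap B.subtype) ≃+ (↥D ⧸ C.comap D.subtype),
    ∀ r ∈ R, ∀ (v : W) (hv : v ∈ B) (hrv : r • v ∈ B)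
      (w : W') (hw : w ∈ D) (hrw : r • w ∈ D),
      e (Submodule.Quotient.mk ⟨v, hv⟩) = Submodule.Quotient.mk ⟨w, hw⟩ →
      e (Submodule.Quotient.mk ⟨r • v, hrv⟩) = Submodule.Quotient.mk ⟨r • w, hrw⟩

/-- The set `M_I`: sub-`R`-modules `N` of `V` with
`⊕ᵢ(fᵢ^(sᵢ-1) ⊕ fᵢIᵢ) ⊆ N ⊆ ⊕ᵢ(Oᵢ^(sᵢ-1) ⊕ Iᵢ)` and `N·O = ⊕ᵢ(Oᵢ^(sᵢ-1) ⊕ Iᵢ)`;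
these are exactly the preimages `q_I⁻¹(Ñ)` of the sub-`R`-modules `Ñ` of `Q(I)`
with `Ñ·O = Q(I)`. -/
def MSet (R : Subalgebra Z (∀ i, K i)) (I : ∀ i, Submodule Z (K i)) :
    Set (Submodule Z (∀ i, Fin (s i) → K i)) :=
  {N | stdModLow Z K s R I ≤ N ∧ N ≤ stdMod Z K s I ∧ IsStableUnder Z K R N ∧
    extendOrd Z K (integralClosure Z (∀ i, K i)) N = stdMod Z K s I}

/-- The set `q_I⁻¹(ψ̃(q_O(M)))`, where `ψ̃` is realised by the additive equivalence `e`
between `Q(O) = (⊕ᵢ(Oᵢ^(sᵢ-1) ⊕ Oᵢ))/(⊕ᵢ(fᵢ^(sᵢ-1) ⊕ fᵢOᵢ))` and `Q(I)`. -/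
def psiSet (R : Subalgebra Z (∀ i, K i)) (I : ∀ i, Submodule Z (K i))
    (e : (↥(stdMod Z K s (maxFam Z K)) ⧸
            (stdModLow Z K s R (maxFam Z K)).comap (stdMod Z K s (maxFam Z K)).subtype) ≃+
         (↥(stdMod Z K s I) ⧸ (stdModLow Z K s R I).comap (stdMod Z K s I).subtype))
    (M : Submodule Z (∀ i, Fin (s i) → K i)) : Set (∀ i, Fin (s i) → K i) :=
  {v | ∃ (hv : v ∈ stdMod Z K s I), ∃ m, ∃ (_ : m ∈ M) (hmO : m ∈ stdMod Z K s (maxFam Z K)),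
    e (Submodule.Quotient.mk ⟨m, hmO⟩) = Submodule.Quotient.mk ⟨v, hv⟩}


/-- An `R`-linear isomorphism between the quotients `B/A` and `D/C` of sub-`Z`-modules
of `Kᵢ`, where `r ∈ R` acts on `Kᵢ` through its `i`-th component. -/
def QuotModIsoComp (R : Subalgebra Z (∀ i, K i)) (i : Fin n)
    (B A D C : Submodule Z (K i)) : Prop :=
  ∃ e : (↥B ⧸ A.comap B.subtype) ≃+ (↥D ⧸ C.comap D.subtype),
    ∀ r ∈ R, ∀ (v : K i) (hv : v ∈ B) (hrv : r i * v ∈ B)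
      (w : K i) (hw : w ∈ D) (hrw : r i * w ∈ D),
      e (Submodule.Quotient.mk ⟨v, hv⟩) = Submodule.Quotient.mk ⟨w, hw⟩ →
      e (Submodule.Quotient.mk ⟨r i * v, hrv⟩) = Submodule.Quotient.mk ⟨r i * w, hrw⟩

/- ### Auxiliary lemmas -/

lemma aux_single_mul (i : Fin n) (a : K i) (y : ∀ j, K j) :
    Pi.single i a * y = Pi.single i (a * y i) := by
  funext j
  rcases eq_or_ne j i with rfl | h
  · simp
  · simp [Pi.single_eq_of_ne h]

lemma aux_single_integral (i : Fin n) {b : K i}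
    (hb : b ∈ integralClosure Z (K i)) :
    Pi.single i b ∈ integralClosure Z (∀ j, K j) := by
  rw [mem_integralClosure_iff] at *
  obtain ⟨p, hp, hpb⟩ := hb
  refine ⟨Polynomial.X * p, Polynomial.monic_X.mul hp, ?_⟩
  have key : ∀ j, Polynomial.aeval ((Pi.single i b : ∀ j, K j) j) (Polynomial.X * p) = 0 := by
    intro j
    rcases eq_or_ne j i with rfl | h
    · rw [Pi.single_eq_same, map_mul, Polynomial.aeval_X, Polynomial.aeval_def, hpb, mul_zero]
    · rw [Pi.single_eq_of_ne h, map_mul, Polynomial.aeval_X, zero_mul]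
  have h2 : Polynomial.aeval (Pi.single i b : ∀ j, K j) (Polynomial.X * p) = 0 := by
    funext j
    have h3 := (Polynomial.aeval_algHom_apply (Pi.evalAlgHom Z K j)
      (Pi.single i b : ∀ j, K j) (Polynomial.X * p)).symm
    calc (Polynomial.aeval (Pi.single i b : ∀ j, K j) (Polynomial.X * p)) j
        = Polynomial.aeval ((Pi.single i b : ∀ j, K j) j) (Polynomial.X * p) := h3
      _ = 0 := key j
  rw [← Polynomial.aeval_def]
  exact h2

lemma aux_comp_integral (i : Fin n) {x : ∀ j, K j}
    (hx : x ∈ integralClosure Z (∀ j, K j)) : x i ∈ integralClosure Z (K i) := by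
  rw [mem_integralClosure_iff] at *
  exact hx.map (Pi.evalAlgHom Z K i)

lemma aux_mem_condComp {R : Subalgebra Z (∀ i, K i)} {i : Fin n} {a : K i} :
    a ∈ conductorComp Z K R i ↔ ∀ b ∈ integralClosure Z (K i), Pi.single i (a * b) ∈ R :=
  Iff.rfl

lemma aux_mem_condSub {R : Subalgebra Z (∀ i, K i)} {x : ∀ i, K i} :
    x ∈ conductorSub Z K R ↔ ∀ y ∈ integralClosure Z (∀ i, K i), x * y ∈ R :=
  Iff.rfl

lemma aux_comp_cond (R : Subalgebra Z (∀ i, K i)) (i : Fin n) {x : ∀ j, K j}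
    (hx : x ∈ conductorSub Z K R) : x i ∈ conductorComp Z K R i := by
  rw [aux_mem_condComp]
  intro b hb
  have h1 := (aux_mem_condSub Z K).mp hx (Pi.single i b) (aux_single_integral Z K i hb)
  have h2 : x * Pi.single i b = Pi.single i (x i * b) := by
    rw [mul_comm, aux_single_mul, mul_comm b]
  rwa [h2] at h1

lemma aux_single_cond (R : Subalgebra Z (∀ i, K i)) (i : Fin n) {a : K i}
    (ha : a ∈ conductorComp Z K R i) : Pi.single i a ∈ conductorSub Z K R := by
  rw [aux_mem_condSub]
  intro y hy
  rw [aux_single_mul]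
  exact (aux_mem_condComp Z K).mp ha (y i) (aux_comp_integral Z K i hy)

lemma aux_quotEquiv {W : Type} [AddCommGroup W] [Module Z W]
    (B A D C : Submodule Z W) (hBD : B ≤ D) (hA : A = C ⊓ B) (hsum : C ⊔ B = D) :
    ∃ e : (↥B ⧸ A.comap B.subtype) ≃+ (↥D ⧸ C.comap D.subtype),
      ∀ (v : W) (hv : v ∈ B),
        e (Submodule.Quotient.mk ⟨v, hv⟩) = Submodule.Quotient.mk ⟨v, hBD hv⟩ := by
  classical
  let l : ↥B →ₗ[Z] ↥D ⧸ C.comap D.subtype :=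
    (C.comap D.subtype).mkQ ∘ₗ Submodule.inclusion hBD
  have hker : ∀ x ∈ A.comap B.subtype, l x = 0 := by
    intro x hx
    have hxC : (x : W) ∈ C := by
      have hxA : (x : W) ∈ A := hx
      rw [hA] at hxA
      exact hxA.1
    show Submodule.Quotient.mk (Submodule.inclusion hBD x) = 0
    rw [Submodule.Quotient.mk_eq_zero]
    exact hxC
  let e0 := Submodule.liftQ (A.comap B.subtype) l hker
  have he0 : ∀ (v : W) (hv : v ∈ B),
      e0 (Submodule.Quotient.mk ⟨v, hv⟩) = Submodule.Quotient.mk ⟨v, hBD hv⟩ := by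
    intro v hv
    rfl
  have hinj : Function.Injective e0 := by
    intro x y hxy
    obtain ⟨⟨v, hv⟩, rfl⟩ := Submodule.Quotient.mk_surjective _ x
    obtain ⟨⟨u, hu⟩, rfl⟩ := Submodule.Quotient.mk_surjective _ y
    rw [he0 v hv, he0 u hu, Submodule.Quotient.eq] at hxy
    have hvuC : v - u ∈ C := hxy
    rw [Submodule.Quotient.eq]
    show v - u ∈ A
    rw [hA]
    exact ⟨hvuC, B.sub_mem hv hu⟩
  have hsurj : Function.Surjective e0 := by
    intro y
    obtain ⟨⟨d, hd⟩, rfl⟩ := Submodule.Quotient.mk_surjective _ y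
    have hd' : d ∈ C ⊔ B := by rw [hsum]; exact hd
    obtain ⟨c, hc, b, hb, rfl⟩ := Submodule.mem_sup.mp hd'
    refine ⟨Submodule.Quotient.mk ⟨b, hb⟩, ?_⟩
    rw [he0 b hb, Submodule.Quotient.eq]
    show b - (c + b) ∈ C
    have hbc : b - (c + b) = -c := by abel
    rw [hbc]
    exact C.neg_mem hc
  exact ⟨(LinearEquiv.ofBijective e0 ⟨hinj, hsurj⟩).toAddEquiv, fun v hv => he0 v hv⟩

/-- If the fractional `O`-ideal `J` is coprime to the conductor,
i.e. `f + J = O`, then `fᵢJᵢ = fᵢ ∩ Jᵢ`, `fᵢ + Jᵢ = Oᵢ`, there are `R`-module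
isomorphisms `Jᵢ/fᵢJᵢ ≅ Oᵢ/fᵢ`, and consequently `J/fJ ≅ O/f` as `R`-modules. -/
theorem statement14
    (hZ : ¬ IsField Z)
    (hOfg : (Subalgebra.toSubmodule (integralClosure Z (∀ i, K i))).FG)
    (R : Subalgebra Z (∀ i, K i)) (hR : IsOrderIn Z Q K R)
    (J : Submodule Z (∀ i, K i))
    (hJ : IsFracIdealOf Z Q K (integralClosure Z (∀ i, K i)) J)
    (hcop : conductorSub Z K R + J = Subalgebra.toSubmodule (integralClosure Z (∀ i, K i))) :
    (∀ i, conductorComp Z K R i * Submodule.map (LinearMap.proj i : (∀ j, K j) →ₗ[Z] K i) J =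
      conductorComp Z K R i ⊓ Submodule.map (LinearMap.proj i : (∀ j, K j) →ₗ[Z] K i) J) ∧
    (∀ i, conductorComp Z K R i + Submodule.map (LinearMap.proj i : (∀ j, K j) →ₗ[Z] K i) J =
      Subalgebra.toSubmodule (integralClosure Z (K i))) ∧
    (∀ i, QuotModIsoComp Z K R i
      (Submodule.map (LinearMap.proj i : (∀ j, K j) →ₗ[Z] K i) J)
      (conductorComp Z K R i * Submodule.map (LinearMap.proj i : (∀ j, K j) →ₗ[Z] K i) J)
      (Subalgebra.toSubmodule (integralClosure Z (K i)))
      (conductorComp Z K R i)) ∧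
    QuotModIso Z K R J (conductorSub Z K R * J)
      (Subalgebra.toSubmodule (integralClosure Z (∀ i, K i))) (conductorSub Z K R) := by
  classical
  -- R is contained in the maximal order
  have hRO : ∀ r ∈ R, r ∈ integralClosure Z (∀ i, K i) := by
    intro r hr
    rw [mem_integralClosure_iff]
    exact IsIntegral.of_mem_of_fg R hR.1 r hr
  -- the conductor is contained in R
  have hfR : ∀ x ∈ conductorSub Z K R, x ∈ R := by
    intro x hx
    have := (aux_mem_condSub Z K).mp hx 1 (one_mem _)
    rwa [mul_one] at this
  have hfO : ∀ x ∈ conductorSub Z K R, x ∈ integralClosure Z (∀ i, K i) :=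
    fun x hx => hRO x (hfR x hx)
  -- J is contained in the maximal order
  have hJO : ∀ x ∈ J, x ∈ integralClosure Z (∀ i, K i) := by
    intro x hx
    have hle : J ≤ Subalgebra.toSubmodule (integralClosure Z (∀ i, K i)) := by
      rw [← hcop, Submodule.add_eq_sup]
      exact le_sup_right
    exact hle hx
  -- the conductor is an O-ideal
  have hfstab : ∀ x ∈ conductorSub Z K R, ∀ y ∈ integralClosure Z (∀ i, K i),
      x * y ∈ conductorSub Z K R := by
    intro x hx y hy
    rw [aux_mem_condSub]
    intro z hz
    rw [mul_assoc]
    exact (aux_mem_condSub Z K).mp hx (y * z) (mul_mem hy hz)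
  -- the conductor is stable under multiplication by R
  have hfRstab : ∀ r ∈ R, ∀ x ∈ conductorSub Z K R, r * x ∈ conductorSub Z K R := by
    intro r hr x hx
    rw [aux_mem_condSub]
    intro y hy
    have : r * x * y = r * (x * y) := mul_assoc _ _ _
    rw [this]
    exact R.mul_mem hr ((aux_mem_condSub Z K).mp hx y hy)
  -- components of the conductor consist of integral elements
  have hfiO : ∀ i, ∀ a ∈ conductorComp Z K R i, a ∈ integralClosure Z (K i) := by
    intro i a ha
    have h1 := hfO _ (aux_single_cond Z K R i ha)
    have h2 := aux_comp_integral Z K i h1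
    rwa [Pi.single_eq_same] at h2
  -- components of J consist of integral elements
  have hJiO : ∀ i, ∀ a ∈ Submodule.map (LinearMap.proj i : (∀ j, K j) →ₗ[Z] K i) J,
      a ∈ integralClosure Z (K i) := by
    intro i a ha
    obtain ⟨u, hu, rfl⟩ := ha
    exact aux_comp_integral Z K i (hJO u hu)
  -- single of a component of J lies in J
  have hsingleJ : ∀ i, ∀ a ∈ Submodule.map (LinearMap.proj i : (∀ j, K j) →ₗ[Z] K i) J,
      Pi.single i a ∈ J := by
    intro i a ha
    obtain ⟨u, hu, rfl⟩ := ha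
    have h1 : Pi.single i (1 : K i) ∈ integralClosure Z (∀ j, K j) :=
      aux_single_integral Z K i (one_mem _)
    have h2 := hJ.2.2 _ h1 u hu
    rw [aux_single_mul, one_mul] at h2
    exact h2
  -- component sums
  have hcompsum : ∀ i, conductorComp Z K R i
      + Submodule.map (LinearMap.proj i : (∀ j, K j) →ₗ[Z] K i) J
      = Subalgebra.toSubmodule (integralClosure Z (K i)) := by
    intro i
    apply le_antisymm
    · rw [Submodule.add_eq_sup]
      apply sup_le
      · intro a ha
        exact hfiO i a ha
      · intro a ha
        exact hJiO i a ha
    · intro c hc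
      have hc' : c ∈ integralClosure Z (K i) := hc
      have hsO : Pi.single i c ∈ Subalgebra.toSubmodule (integralClosure Z (∀ j, K j)) :=
        aux_single_integral Z K i hc'
      rw [← hcop, Submodule.add_eq_sup] at hsO
      obtain ⟨x, hx, y, hy, hxy⟩ := Submodule.mem_sup.mp hsO
      rw [Submodule.add_eq_sup, Submodule.mem_sup]
      refine ⟨x i, aux_comp_cond Z K R i hx, y i, ⟨y, hy, rfl⟩, ?_⟩
      have hcf := congrFun hxy i
      simpa using hcf
  -- component products
  have hcompmul : ∀ i, conductorComp Z K R i
      * Submodule.map (LinearMap.proj i : (∀ j, K j) →ₗ[Z] K i) J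
      = conductorComp Z K R i ⊓ Submodule.map (LinearMap.proj i : (∀ j, K j) →ₗ[Z] K i) J := by
    intro i
    apply le_antisymm
    · apply Submodule.mul_le.mpr
      intro a ha b hb
      rw [Submodule.mem_inf]
      refine ⟨?_, ?_⟩
      · rw [aux_mem_condComp]
        intro c hc
        rw [mul_assoc]
        exact (aux_mem_condComp Z K).mp ha (b * c) (mul_mem (hJiO i b hb) hc)
      · have hs : Pi.single i a ∈ integralClosure Z (∀ j, K j) :=
          aux_single_integral Z K i (hfiO i a ha)
        have hsb : Pi.single i b ∈ J := hsingleJ i b hb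
        have hmem := hJ.2.2 _ hs _ hsb
        refine ⟨_, hmem, ?_⟩
        show (Pi.single i a * Pi.single i b) i = a * b
        rw [aux_single_mul, Pi.single_eq_same, Pi.single_eq_same]
    · rintro x ⟨hxf, hxJ⟩
      have h1 : (1 : K i) ∈ conductorComp Z K R i
          + Submodule.map (LinearMap.proj i : (∀ j, K j) →ₗ[Z] K i) J := by
        rw [hcompsum i]
        exact (Subalgebra.mem_toSubmodule _).mpr (one_mem _)
      rw [Submodule.add_eq_sup] at h1
      obtain ⟨a, ha, b, hb, hab⟩ := Submodule.mem_sup.mp h1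
      have hx2 : x = x * a + x * b := by rw [← mul_add, hab, mul_one]
      rw [hx2]
      apply Submodule.add_mem
      · rw [mul_comm x a]
        exact Submodule.mul_mem_mul ha hxJ
      · exact Submodule.mul_mem_mul hxf hb
  -- the global product
  have hglobmul : conductorSub Z K R * J = conductorSub Z K R ⊓ J := by
    apply le_antisymm
    · apply Submodule.mul_le.mpr
      intro a ha b hb
      rw [Submodule.mem_inf]
      exact ⟨hfstab a ha b (hJO b hb), hJ.2.2 a (hfO a ha) b hb⟩
    · rintro x ⟨hxf, hxJ⟩
      have h1 : (1 : ∀ i, K i) ∈ conductorSub Z K R + J := by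
        rw [hcop]
        exact (Subalgebra.mem_toSubmodule _).mpr (one_mem _)
      rw [Submodule.add_eq_sup] at h1
      obtain ⟨a, ha, b, hb, hab⟩ := Submodule.mem_sup.mp h1
      have hx2 : x = x * a + x * b := by rw [← mul_add, hab, mul_one]
      rw [hx2]
      apply Submodule.add_mem
      · rw [mul_comm x a]
        exact Submodule.mul_mem_mul ha hxJ
      · exact Submodule.mul_mem_mul hxf hb
  -- R-stability of the conductor components
  have hfiRstab : ∀ r ∈ R, ∀ (i : Fin n), ∀ a ∈ conductorComp Z K R i,
      r i * a ∈ conductorComp Z K R i := by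
    intro r hr i a ha
    rw [aux_mem_condComp]
    intro c hc
    have h1 : Pi.single i (r i * (a * c)) = r * Pi.single i (a * c) := by
      rw [mul_comm r, aux_single_mul, mul_comm (a * c)]
    rw [mul_assoc, h1]
    exact R.mul_mem hr ((aux_mem_condComp Z K).mp ha c hc)
  refine ⟨hcompmul, hcompsum, ?_, ?_⟩
  · -- componentwise quotient isomorphisms
    intro i
    have hBD : Submodule.map (LinearMap.proj i : (∀ j, K j) →ₗ[Z] K i) J
        ≤ Subalgebra.toSubmodule (integralClosure Z (K i)) := fun a ha => hJiO i a ha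
    have hsum : conductorComp Z K R i
        ⊔ Submodule.map (LinearMap.proj i : (∀ j, K j) →ₗ[Z] K i) J
        = Subalgebra.toSubmodule (integralClosure Z (K i)) := by
      rw [← Submodule.add_eq_sup]
      exact hcompsum i
    obtain ⟨e, he⟩ := aux_quotEquiv Z _ _ _ _ hBD (hcompmul i) hsum
    refine ⟨e, ?_⟩
    intro r hr v hv hrv w hw hrw hevw
    rw [he v hv] at hevw
    rw [Submodule.Quotient.eq] at hevw
    have hdiff : v - w ∈ conductorComp Z K R i := hevw
    rw [he _ hrv, Submodule.Quotient.eq]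
    show r i * v - r i * w ∈ conductorComp Z K R i
    rw [← mul_sub]
    exact hfiRstab r hr i _ hdiff
  · -- the global quotient isomorphism
    have hBD : J ≤ Subalgebra.toSubmodule (integralClosure Z (∀ i, K i)) :=
      fun x hx => hJO x hx
    have hsum : conductorSub Z K R ⊔ J
        = Subalgebra.toSubmodule (integralClosure Z (∀ i, K i)) := by
      rw [← Submodule.add_eq_sup]
      exact hcop
    obtain ⟨e, he⟩ := aux_quotEquiv Z _ _ _ _ hBD hglobmul hsum
    refine ⟨e, ?_⟩
    intro r hr v hv hrv w hw hrw hevw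
    rw [he v hv] at hevw
    rw [Submodule.Quotient.eq] at hevw
    have hdiff : v - w ∈ conductorSub Z K R := hevw
    rw [he _ hrv, Submodule.Quotient.eq]
    show r • v - r • w ∈ conductorSub Z K R
    rw [smul_eq_mul, smul_eq_mul, ← mul_sub]
    exact hfRstab r hr _ hdiff

end Paper
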